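/- arXiv:2605.15346 — 3 statements merged into one kernel-verified Lean document; each statement's English description precedes it below -/
import Mathlib

section
/- Let $u : \Omega \to \mathbb{R}$ be measurable and locally essentially bounded from below on an open set $\Omega \subset \mathbb{R}^N$, and suppose $u \in L^1_{loc}(\Omega)$. Suppose $u$ satisfies the following property (D): there exist constants $a, b \in (0,1)$ such that for every $K > 0$, every ball $B_\gamma(y) \subset \Omega$ with $\gamma \in (0,1]$, and every $\beta_- \le \operatorname{ess\,inf}_{B_\gamma(y)} u$, there exists $\rho \in (0,1)$ (independent of $\gamma$) such that $|\{u \le \beta_- + K\} \cap B_\gamma(y)| \le \rho |B_\gamma(y)|$ implies $u \ge \beta_- + aK$ a.e. in $B_{b\gamma}(y)$. Then $u(x) = u_*(x)$ for every Lebesgue point $x$ of $u$, where $u_*(x) = \lim_{r \to 0} \operatorname{ess\,inf}_{B_r(x)} u$. In particular, $u_*$ is a lower semicontinuous representative of $u$ in $\Omega$. -/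
/-!
The essential infima `m r` of `u` over the balls `B_r(x)` increase as `r ↓ 0`, so they converge to
their supremum `L`. Since `m r ≤ u(x) + ⨍_{B_r(x)} |u(x) - u|`, the Lebesgue point property gives
`L ≤ u(x)`. If `L < u(x)`, put `K = (u(x) - L) / 2` and take `β` slightly below `L`, so that
`β ≤ m γ` for small `γ`. By Markov's inequality `{u ≤ β + K}` fills at most the fraction
`⨍_{B_γ(x)} |u(x) - u| / K` of `B_γ(x)`, which is below the `ρ` of property (D) for small `γ`;
then (D) yields `m (b γ) ≥ β + a K > L`, a contradiction.
-/

open MeasureTheory Metric Set Filter Topology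

section EssInf

variable {α : Type*} [MeasurableSpace α] {μ : Measure α}

lemma isCoboundedUnder_ge_ae (hμ : μ ≠ 0) (f : α → ℝ) :
    IsCoboundedUnder (· ≥ ·) (ae μ) f := by
  have : NeBot (ae μ) := ae_neBot.2 hμ
  obtain ⟨n, hn⟩ : ∃ n : ℕ, ¬ ∀ᵐ y ∂μ, (n : ℝ) ≤ f y := by
    by_contra! h
    obtain ⟨y, hy⟩ := (ae_all_iff.2 h).exists
    obtain ⟨n, hn⟩ := exists_nat_gt (f y)
    exact (hy n).not_gt hn
  refine ⟨n, fun c hc => ?_⟩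
  by_contra! hcn
  exact hn ((eventually_map.1 hc).mono fun y hy => hcn.le.trans hy)

lemma essInf_restrict_le_add_setAverage_abs_sub {s : Set α} {u : α → ℝ} (c : ℝ)
    (hs₀ : μ s ≠ 0) (hs : μ s ≠ ⊤) (hbdd : IsBoundedUnder (· ≥ ·) (ae (μ.restrict s)) u)
    (hint : IntegrableOn (fun y => |c - u y|) s μ) :
    essInf u (μ.restrict s) ≤ c + ⨍ y in s, |c - u y| ∂μ := by
  have := isFiniteMeasure_restrict.2 hs
  obtain ⟨y, hy, hy_le⟩ := exists_notMem_null_le_average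
    (mt Measure.restrict_eq_zero.1 hs₀) hint (meas_lt_essInf hbdd)
  have hy' : essInf u (μ.restrict s) ≤ u y := not_lt.1 hy
  linarith [le_abs_self (u y - c), abs_sub_comm (u y) c]

lemma measure_sep_le_of_setAverage_abs_sub_le {s : Set α} {u : α → ℝ} {c t K ρ : ℝ}
    (hs : MeasurableSet s) (hs_fin : μ s ≠ ⊤) (hint : IntegrableOn (fun y => |c - u y|) s μ)
    (hK : 0 < K) (htc : t + K ≤ c) (havg : ⨍ y in s, |c - u y| ∂μ ≤ ρ * K) :
    μ {z ∈ s | u z ≤ t} ≤ ENNReal.ofReal ρ * μ s := by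
  have hρ : 0 ≤ ρ := by
    refine nonneg_of_mul_nonneg_left ?_ hK
    refine le_trans ?_ havg
    rw [setAverage_eq]
    exact smul_nonneg (inv_nonneg.2 measureReal_nonneg) (integral_nonneg fun _ => abs_nonneg _)
  have hsub : {z ∈ s | u z ≤ t} ⊆ {z | K ≤ |c - u z|} ∩ s := fun z ⟨hzs, hz⟩ =>
    ⟨show K ≤ |c - u z| by linarith [le_abs_self (c - u z)], hzs⟩
  have hmarkov : K * μ.real ({z | K ≤ |c - u z|} ∩ s) ≤ K * (ρ * μ.real s) := by
    rw [← measureReal_restrict_apply' hs]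
    calc K * (μ.restrict s).real {z | K ≤ |c - u z|}
        ≤ ∫ y in s, |c - u y| ∂μ :=
          mul_meas_ge_le_integral_of_nonneg (ae_of_all _ fun _ => abs_nonneg _) hint K
      _ = μ.real s * ⨍ y in s, |c - u y| ∂μ := (measure_smul_setAverage _ hs_fin).symm
      _ ≤ μ.real s * (ρ * K) := by gcongr
      _ = K * (ρ * μ.real s) := by ring
  have hreal := le_of_mul_le_mul_left hmarkov hK
  calc μ {z ∈ s | u z ≤ t} ≤ μ ({z | K ≤ |c - u z|} ∩ s) := measure_mono hsub
    _ = ENNReal.ofReal (μ.real ({z | K ≤ |c - u z|} ∩ s)) :=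
        (ofReal_measureReal (measure_ne_top_of_subset inter_subset_right hs_fin)).symm
    _ ≤ ENNReal.ofReal (ρ * μ.real s) := ENNReal.ofReal_le_ofReal hreal
    _ = ENNReal.ofReal ρ * μ s := by rw [ENNReal.ofReal_mul hρ, ofReal_measureReal hs_fin]

end EssInf

theorem tendsto_nhdsGT_zero_of_improve_lowerBound {m : ℝ → ℝ} {δ a v : ℝ} (hδ : 0 < δ)
    (ha : 0 < a) (hm : AntitoneOn m (Ioo 0 δ))
    (hup : ∀ ε > 0, ∀ᶠ r in 𝓝[>] 0, m r ≤ v + ε)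
    (himp : ∀ K > 0, ∀ β, β + 2 * K ≤ v → (∃ r ∈ Ioo 0 δ, β ≤ m r) →
      ∃ r ∈ Ioo 0 δ, β + a * K ≤ m r) :
    Tendsto m (𝓝[>] 0) (𝓝 v) := by
  -- If `m` stayed below some `c < v`, an improvement step started just below `L = sup m`
  -- would push `m` above `L`.
  refine tendsto_order.2 ⟨fun c hc => ?_, fun c hc => ?_⟩
  · by_contra hnot
    have hle : ∀ r ∈ Ioo 0 δ, m r ≤ c := fun r hr => by
      by_contra! hcr
      refine hnot ?_
      filter_upwards [Ioo_mem_nhdsGT hr.1] with s hs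
      exact hcr.trans_le (hm ⟨hs.1, hs.2.trans hr.2⟩ hr hs.2.le)
    have hne : (m '' Ioo 0 δ).Nonempty := (nonempty_Ioo.2 hδ).image m
    have hbdd : BddAbove (m '' Ioo 0 δ) := ⟨c, forall_mem_image.2 hle⟩
    set L := sSup (m '' Ioo 0 δ)
    have hLc : L ≤ c := csSup_le hne (forall_mem_image.2 hle)
    set K := (v - L) / 2 with hK_eq
    have hK : 0 < K := by linarith
    have haK : 0 < a * K := mul_pos ha hK
    obtain ⟨_, ⟨r, hr, rfl⟩, hβr⟩ := exists_lt_of_lt_csSup hne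
      (show L - a * K / 2 < L by linarith)
    obtain ⟨r', hr', hr'm⟩ := himp K hK (L - a * K / 2) (by linarith) ⟨r, hr, hβr.le⟩
    have : m r' ≤ L := le_csSup hbdd (mem_image_of_mem m hr')
    linarith
  · filter_upwards [hup ((c - v) / 2) (by linarith)] with r hr
    linarith

section Ball

variable {E : Type*} [PseudoMetricSpace E] [MeasurableSpace E] {μ : Measure E}
  {u : E → ℝ} {x : E} {δ M c : ℝ}

lemma MeasureTheory.LocallyIntegrableOn.integrableOn_abs_const_sub_ball [ProperSpace E]
    [IsFiniteMeasureOnCompacts μ] {Ω : Set E} {r : ℝ} (hloc : LocallyIntegrableOn u Ω μ)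
    (hr : closedBall x r ⊆ Ω) (c : ℝ) :
    IntegrableOn (fun y => |c - u y|) (ball x r) μ :=
  ((integrableOn_const measure_ball_lt_top.ne).sub
    ((hloc.integrableOn_compact_subset hr (isCompact_closedBall x r)).mono_set
      ball_subset_closedBall)).abs

lemma antitoneOn_essInf_restrict_ball [μ.IsOpenPosMeasure]
    (hM : ∀ᵐ y ∂μ.restrict (ball x δ), M ≤ u y) :
    AntitoneOn (fun r => essInf u (μ.restrict (ball x r))) (Ioc 0 δ) := by
  intro r hr s hs hrs
  exact essInf_antitone_measure
    (Measure.absolutelyContinuous_of_le (Measure.restrict_mono (ball_subset_ball hrs) le_rfl))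
    (isBoundedUnder_of_eventually_ge
      (ae_restrict_of_ae_restrict_of_subset (ball_subset_ball hs.2) hM))
    (isCoboundedUnder_ge_ae (mt Measure.restrict_eq_zero.1 (measure_ball_pos μ x hr.1).ne') u)

lemma eventually_essInf_restrict_ball_le [ProperSpace E] [μ.IsOpenPosMeasure]
    [IsFiniteMeasureOnCompacts μ] (hδ : 0 < δ) (hM : ∀ᵐ y ∂μ.restrict (ball x δ), M ≤ u y)
    (hint : ∀ r ∈ Ioo 0 δ, IntegrableOn (fun y => |c - u y|) (ball x r) μ)
    (hleb : Tendsto (fun r => ⨍ y in ball x r, |c - u y| ∂μ) (𝓝[>] 0) (𝓝 0)) :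
    ∀ ε > 0, ∀ᶠ r in 𝓝[>] 0, essInf u (μ.restrict (ball x r)) ≤ c + ε := by
  intro ε hε
  filter_upwards [hleb.eventually_lt_const hε, Ioo_mem_nhdsGT hδ] with r havg hr
  have := essInf_restrict_le_add_setAverage_abs_sub c (measure_ball_pos μ x hr.1).ne'
    measure_ball_lt_top.ne (isBoundedUnder_of_eventually_ge
      (ae_restrict_of_ae_restrict_of_subset (ball_subset_ball hr.2.le) hM)) (hint r hr)
  linarith

lemma exists_add_le_essInf_restrict_ball [ProperSpace E] [OpensMeasurableSpace E]
    [μ.IsOpenPosMeasure] [IsFiniteMeasureOnCompacts μ] {a b K β ρ : ℝ}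
    (hM : ∀ᵐ y ∂μ.restrict (ball x δ), M ≤ u y)
    (hint : ∀ r ∈ Ioo 0 δ, IntegrableOn (fun y => |c - u y|) (ball x r) μ)
    (hleb : Tendsto (fun r => ⨍ y in ball x r, |c - u y| ∂μ) (𝓝[>] 0) (𝓝 0))
    (hb : b ∈ Ioo 0 1) (hK : 0 < K) (hβ : β + 2 * K ≤ c) (hρ : 0 < ρ)
    (hD : ∀ γ ∈ Ioo 0 δ, β ≤ essInf u (μ.restrict (ball x γ)) →
      μ {z ∈ ball x γ | u z ≤ β + K} ≤ ENNReal.ofReal ρ * μ (ball x γ) →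
      ∀ᵐ z ∂μ.restrict (ball x (b * γ)), β + a * K ≤ u z) :
    (∃ r ∈ Ioo 0 δ, β ≤ essInf u (μ.restrict (ball x r))) →
      ∃ r ∈ Ioo 0 δ, β + a * K ≤ essInf u (μ.restrict (ball x r)) := by
  rintro ⟨r, hr, hβr⟩
  obtain ⟨γ, havg, hγ⟩ := ((hleb.eventually_lt_const (mul_pos hρ hK)).and
    (Ioo_mem_nhdsGT hr.1)).exists
  have hγδ : γ ∈ Ioo 0 δ := ⟨hγ.1, hγ.2.trans hr.2⟩
  have hβγ : β ≤ essInf u (μ.restrict (ball x γ)) :=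
    hβr.trans (antitoneOn_essInf_restrict_ball hM ⟨hγ.1, hγδ.2.le⟩ ⟨hr.1, hr.2.le⟩ hγ.2.le)
  have hsmall := measure_sep_le_of_setAverage_abs_sub_le (t := β + K) measurableSet_ball
    measure_ball_lt_top.ne (hint γ hγδ) hK (by linarith) havg.le
  have hbγ : b * γ ∈ Ioo 0 δ :=
    ⟨mul_pos hb.1 hγ.1, (mul_lt_of_lt_one_left hγ.1 hb.2).trans hγδ.2⟩
  exact ⟨b * γ, hbγ, le_essInf_of_ae_le _ (hD γ hγδ hβγ hsmall)
    (isCoboundedUnder_ge_ae (mt Measure.restrict_eq_zero.1 (measure_ball_pos μ x hbγ.1).ne') u)⟩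

end Ball

theorem stmt12_general (N : ℕ) (Ω : Set (EuclideanSpace ℝ (Fin N)))
    (u : EuclideanSpace ℝ (Fin N) → ℝ)
    (hloc : LocallyIntegrableOn u Ω volume)
    (hbdd : ∀ x ∈ Ω, ∃ r > (0:ℝ), ball x r ⊆ Ω ∧
      ∃ M : ℝ, ∀ᵐ y ∂(volume.restrict (ball x r)), M ≤ u y)
    (a b : ℝ) (ha : a ∈ Set.Ioo (0:ℝ) 1) (hb : b ∈ Set.Ioo (0:ℝ) 1)
    (hD : ∀ K > (0:ℝ), ∀ β : ℝ, ∃ ρ ∈ Set.Ioo (0:ℝ) 1,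
      ∀ (y : EuclideanSpace ℝ (Fin N)) (γ : ℝ), γ ∈ Set.Ioc (0:ℝ) 1 → ball y γ ⊆ Ω →
        β ≤ essInf u (volume.restrict (ball y γ)) →
        volume {z ∈ ball y γ | u z ≤ β + K} ≤ ENNReal.ofReal ρ * volume (ball y γ) →
        ∀ᵐ z ∂(volume.restrict (ball y (b * γ))), β + a * K ≤ u z)
    (x : EuclideanSpace ℝ (Fin N)) (hx : x ∈ Ω)
    (hleb : Tendsto (fun r : ℝ => ⨍ y in ball x r, |u x - u y|)
      (nhdsWithin 0 (Set.Ioi 0)) (nhds 0)) :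
    Tendsto (fun r : ℝ => essInf u (volume.restrict (ball x r)))
      (nhdsWithin 0 (Set.Ioi 0)) (nhds (u x)) := by
  obtain ⟨R, hR, hRΩ, M, hM⟩ := hbdd x hx
  have hδ : 0 < min R 1 := lt_min hR one_pos
  have hδΩ : ball x (min R 1) ⊆ Ω := (ball_subset_ball (min_le_left R 1)).trans hRΩ
  have hMδ : ∀ᵐ y ∂volume.restrict (ball x (min R 1)), M ≤ u y :=
    ae_restrict_of_ae_restrict_of_subset (ball_subset_ball (min_le_left R 1)) hM
  have hint : ∀ r ∈ Ioo 0 (min R 1), IntegrableOn (fun y => |u x - u y|) (ball x r) :=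
    fun r hr => hloc.integrableOn_abs_const_sub_ball
      ((closedBall_subset_ball hr.2).trans hδΩ) (u x)
  refine tendsto_nhdsGT_zero_of_improve_lowerBound hδ ha.1
    ((antitoneOn_essInf_restrict_ball hMδ).mono Ioo_subset_Ioc_self)
    (eventually_essInf_restrict_ball_le hδ hMδ hint hleb) fun K hK β hβ => ?_
  obtain ⟨ρ, hρ, hDρ⟩ := hD K hK β
  exact exists_add_le_essInf_restrict_ball hMδ hint hleb hb hK hβ hρ.1 fun γ hγ =>
    hDρ x γ ⟨hγ.1, hγ.2.le.trans (min_le_right R 1)⟩ ((ball_subset_ball hγ.2.le).trans hδΩ)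

/-- Lower semicontinuity at Lebesgue points (Liao): if `u` is measurable, locally integrable
and locally essentially bounded below on an open set `Ω`, and satisfies the De Giorgi-type
property (D), then at every Lebesgue point `x ∈ Ω` of `u` one has
`u(x) = u_*(x) := lim_{r→0} essinf_{B_r(x)} u`. -/
theorem stmt12 (N : ℕ) (Ω : Set (EuclideanSpace ℝ (Fin N))) (hΩ : IsOpen Ω)
    (u : EuclideanSpace ℝ (Fin N) → ℝ) (hmeas : Measurable u)
    (hloc : LocallyIntegrableOn u Ω volume)
    (hbdd : ∀ x ∈ Ω, ∃ r > (0:ℝ), ball x r ⊆ Ω ∧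
      ∃ M : ℝ, ∀ᵐ y ∂(volume.restrict (ball x r)), M ≤ u y)
    (a b : ℝ) (ha : a ∈ Set.Ioo (0:ℝ) 1) (hb : b ∈ Set.Ioo (0:ℝ) 1)
    (hD : ∀ K > (0:ℝ), ∀ β : ℝ, ∃ ρ ∈ Set.Ioo (0:ℝ) 1,
      ∀ (y : EuclideanSpace ℝ (Fin N)) (γ : ℝ), γ ∈ Set.Ioc (0:ℝ) 1 → ball y γ ⊆ Ω →
        β ≤ essInf u (volume.restrict (ball y γ)) →
        volume {z ∈ ball y γ | u z ≤ β + K} ≤ ENNReal.ofReal ρ * volume (ball y γ) →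
        ∀ᵐ z ∂(volume.restrict (ball y (b * γ))), β + a * K ≤ u z)
    (x : EuclideanSpace ℝ (Fin N)) (hx : x ∈ Ω)
    (hleb : Tendsto (fun r : ℝ => ⨍ y in ball x r, |u x - u y|)
      (nhdsWithin 0 (Set.Ioi 0)) (nhds 0)) :
    Tendsto (fun r : ℝ => essInf u (volume.restrict (ball x r)))
      (nhdsWithin 0 (Set.Ioi 0)) (nhds (u x)) :=
  stmt12_general N Ω u hloc hbdd a b ha hb hD x hx hleb
end

section
/- Let $A \subset B_r(x_0) \subset \mathbb{R}^N$ be a measurable set with $r \in (0,1]$ and $\delta' \in (0,1)$. Define $A_{\delta'} = \bigcup_{\gamma > 0} \{ B_{3\gamma}(x) \cap B_r(x_0) : x \in B_r(x_0), \ |A \cap B_{3\gamma}(x)| > \delta' |B_\gamma(x)| \}$. Then either $|A_{\delta'}| \ge \frac{C}{\delta'} |A|$ for a dimensional constant $C = C(N) \in (0,1]$, or $A_{\delta'} = B_r(x_0)$. -/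
open MeasureTheory Metric Set

/-- The Krylov–Safonov dilated set `A_{δ'}`: the union of the sets `B_{3γ}(x) ∩ B_r(x₀)`
over `x ∈ B_r(x₀)` and `γ > 0` such that `|A ∩ B_{3γ}(x)| > δ' |B_γ(x)|`. -/
def ksUnion (N : ℕ) (x₀ : EuclideanSpace ℝ (Fin N)) (r δ' : ℝ)
    (A : Set (EuclideanSpace ℝ (Fin N))) : Set (EuclideanSpace ℝ (Fin N)) :=
  ⋃ (x : EuclideanSpace ℝ (Fin N)) (_ : x ∈ ball x₀ r) (γ : ℝ) (_ : 0 < γ)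
    (_ : ENNReal.ofReal δ' * volume (ball x γ) < volume (A ∩ ball x (3 * γ))),
    ball x (3 * γ) ∩ ball x₀ r

/-!
At a Lebesgue density point `x` of `A` small radii `γ` are admissible, i.e.
`|A ∩ B_{3γ}(x)| > δ'|B_γ(x)|`, while a point `y ∈ B_r(x₀) \ A_{δ'}` forces every admissible
radius to be at most `r`. Hence there is an admissible `γ` for which `2γ` is not admissible,
and then
`|A ∩ B̄_{5γ}(x)| ≤ |A ∩ B_{6γ}(x)| ≤ δ'|B_{2γ}(x)| ≤ 4^N δ'|B_γ(x) ∩ B_r(x₀)|`,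
the last step because `B_γ(x) ∩ B_r(x₀)` contains a ball of radius `γ/2`. The Vitali covering lemma
applied to the balls `B̄_γ(x)` over density points `x ∈ A` gives `|A| ≤ 4^N δ' |A_{δ'}|`, so
`C = 4^{-N}` works.
-/

open Filter Topology Module TopologicalSpace
open scoped ENNReal

section Doubling

variable {E : Type*} [NormedAddCommGroup E] [NormedSpace ℝ E]

theorem exists_ball_half_subset_ball_inter_ball {x₀ x : E} {r γ : ℝ} (hx : x ∈ ball x₀ r)
    (hγ₀ : 0 ≤ γ) (hγ : γ ≤ 2 * r) : ∃ z, ball z (γ / 2) ⊆ ball x γ ∩ ball x₀ r := by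
  have hd : dist x x₀ < r := mem_ball.1 hx
  have hr : 0 < r := dist_nonneg.trans_lt hd
  set c : ℝ := γ / (2 * r)
  have hc₀ : 0 ≤ c := by positivity
  have hc₁ : c ≤ 1 := (div_le_one (by positivity)).2 hγ
  have hcr : c * r = γ / 2 := by rw [div_mul_eq_mul_div, mul_div_mul_right _ _ hr.ne']
  refine ⟨AffineMap.lineMap x x₀ c, subset_inter (ball_subset_ball' ?_) (ball_subset_ball' ?_)⟩
  · rw [dist_lineMap_left, Real.norm_of_nonneg hc₀]
    nlinarith
  · rw [dist_lineMap_right, Real.norm_of_nonneg (sub_nonneg.2 hc₁)]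
    nlinarith

variable [MeasurableSpace E] [BorelSpace E] [FiniteDimensional ℝ E]
  (μ : Measure E) [μ.IsAddHaarMeasure]

theorem addHaar_ball_two_mul (x : E) (γ : ℝ) :
    μ (ball x (2 * γ)) = 2 ^ finrank ℝ E * μ (ball x γ) := by
  rw [Measure.addHaar_ball_mul_of_pos μ x two_pos, Measure.addHaar_ball_center μ x,
    ENNReal.ofReal_pow zero_le_two, ENNReal.ofReal_ofNat]

theorem addHaar_ball_le_two_pow_mul_inter {x₀ x : E} {r γ : ℝ} (hx : x ∈ ball x₀ r)
    (hγ₀ : 0 ≤ γ) (hγ : γ ≤ 2 * r) :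
    μ (ball x γ) ≤ 2 ^ finrank ℝ E * μ (ball x γ ∩ ball x₀ r) := by
  obtain ⟨z, hz⟩ := exists_ball_half_subset_ball_inter_ball hx hγ₀ hγ
  calc μ (ball x γ) = μ (ball z (2 * (γ / 2))) := by
        rw [mul_div_cancel₀ γ two_ne_zero, Measure.addHaar_ball_center μ x,
          Measure.addHaar_ball_center μ z]
    _ = 2 ^ finrank ℝ E * μ (ball z (γ / 2)) := addHaar_ball_two_mul μ z _
    _ ≤ 2 ^ finrank ℝ E * μ (ball x γ ∩ ball x₀ r) := by gcongr

end Doubling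

section Covering

variable {α : Type*} [PseudoMetricSpace α] [MeasurableSpace α] (μ : Measure α)

theorem exists_lt_measure_inter_ball_three_mul {A : Set α} {x : α} {c : ℝ≥0∞} (hc : c < 1)
    (hx : Tendsto (fun ρ => μ (A ∩ closedBall x ρ) / μ (closedBall x ρ)) (𝓝[>] 0) (𝓝 1)) :
    ∃ γ > 0, c * μ (ball x γ) < μ (A ∩ ball x (3 * γ)) := by
  obtain ⟨γ, hγ, hγ₀ : 0 < γ⟩ :=
    ((hx.eventually (eventually_gt_nhds hc)).and self_mem_nhdsWithin).exists
  refine ⟨γ, hγ₀, ?_⟩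
  calc c * μ (ball x γ) ≤ c * μ (closedBall x γ) := by gcongr; exact ball_subset_closedBall
    _ < μ (A ∩ closedBall x γ) := ENNReal.mul_lt_of_lt_div hγ
    _ ≤ μ (A ∩ ball x (3 * γ)) := by gcongr; exact closedBall_subset_ball (by linarith)

theorem measure_le_mul_of_forall_exists_ball [SeparableSpace α] [OpensMeasurableSpace α]
    {s T : Set α} (hT : MeasurableSet T) {c : ℝ≥0∞} {R : ℝ}
    (h : ∀ x ∈ s, ∃ γ ∈ Ioc 0 R, μ (s ∩ closedBall x (5 * γ)) ≤ c * μ (ball x γ ∩ T)) :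
    μ s ≤ c * μ T := by
  choose! g hg hμ using h
  obtain ⟨u, hus, hdisj, hcov⟩ := Vitali.exists_disjoint_subfamily_covering_enlargement_closedBall
    s id g R (fun x hx => (hg x hx).2) 5 (by norm_num)
  simp only [id] at hdisj hcov
  have hu : u.Countable := hdisj.countable_of_nonempty_interior fun x hx =>
    ⟨x, ball_subset_interior_closedBall (mem_ball_self (hg x (hus hx)).1)⟩
  calc μ s ≤ μ (⋃ x ∈ u, s ∩ closedBall x (5 * g x)) := measure_mono fun y hy => by
        obtain ⟨x, hxu, hsub⟩ := hcov y hy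
        exact mem_biUnion hxu ⟨hy, hsub (mem_closedBall_self (hg y hy).1.le)⟩
    _ ≤ ∑' x : u, μ (s ∩ closedBall x (5 * g x)) := measure_biUnion_le μ hu _
    _ ≤ ∑' x : u, c * μ (ball x (g x) ∩ T) := ENNReal.tsum_le_tsum fun x => hμ x (hus x.2)
    _ = c * μ (⋃ x ∈ u, ball x (g x) ∩ T) := by
        rw [ENNReal.tsum_mul_left, measure_biUnion hu
          (hdisj.mono fun x => inter_subset_left.trans ball_subset_closedBall)
          fun x _ => measurableSet_ball.inter hT]
    _ ≤ c * μ T := by gcongr; exact iUnion₂_subset fun x _ => inter_subset_right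

end Covering

theorem exists_mem_two_mul_notMem {S : Set ℝ} (hne : S.Nonempty) (hbdd : BddAbove S)
    (hpos : ∀ γ ∈ S, 0 < γ) : ∃ γ ∈ S, 2 * γ ∉ S := by
  obtain ⟨γ₀, hγ₀⟩ := hne
  have hsup : 0 < sSup S := (hpos γ₀ hγ₀).trans_le (le_csSup hbdd hγ₀)
  obtain ⟨γ, hγS, hγ⟩ := exists_lt_of_lt_csSup ⟨γ₀, hγ₀⟩ (half_lt_self hsup)
  exact ⟨γ, hγS, fun h => by linarith [le_csSup hbdd h]⟩

section KrylovSafonov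

variable {N : ℕ} {x₀ x y : EuclideanSpace ℝ (Fin N)} {r δ' : ℝ}
  {A : Set (EuclideanSpace ℝ (Fin N))}

def ksAdmissibleRadii (δ' : ℝ) (A : Set (EuclideanSpace ℝ (Fin N)))
    (x : EuclideanSpace ℝ (Fin N)) : Set ℝ :=
  {γ | 0 < γ ∧ ENNReal.ofReal δ' * volume (ball x γ) < volume (A ∩ ball x (3 * γ))}

theorem ksUnion_subset_ball : ksUnion N x₀ r δ' A ⊆ ball x₀ r :=
  iUnion₂_subset fun _ _ => iUnion₂_subset fun _ _ => iUnion_subset fun _ => inter_subset_right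

theorem isOpen_ksUnion : IsOpen (ksUnion N x₀ r δ' A) :=
  isOpen_biUnion fun _ _ => isOpen_biUnion fun _ _ => isOpen_iUnion fun _ =>
    isOpen_ball.inter isOpen_ball

theorem ball_inter_subset_ksUnion (hx : x ∈ ball x₀ r) {γ : ℝ}
    (hγ : γ ∈ ksAdmissibleRadii δ' A x) :
    ball x (3 * γ) ∩ ball x₀ r ⊆ ksUnion N x₀ r δ' A := fun z hz => by
  simp only [ksUnion, mem_iUnion]
  exact ⟨x, hx, γ, hγ.1, hγ.2, hz⟩

theorem le_of_mem_ksAdmissibleRadii (hx : x ∈ ball x₀ r) (hy : y ∈ ball x₀ r)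
    (hyA : y ∉ ksUnion N x₀ r δ' A) {γ : ℝ} (hγ : γ ∈ ksAdmissibleRadii δ' A x) : γ ≤ r := by
  by_contra! hrγ
  refine hyA (ball_inter_subset_ksUnion hx hγ ⟨?_, hy⟩)
  calc dist y x ≤ dist y x₀ + dist x x₀ := dist_triangle_right _ _ _
    _ < r + r := add_lt_add (mem_ball.1 hy) (mem_ball.1 hx)
    _ ≤ 3 * γ := by linarith [dist_nonneg.trans_lt (mem_ball.1 hy)]

theorem exists_volume_inter_closedBall_le (hδ : δ' < 1) (hAsub : A ⊆ ball x₀ r)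
    (hy : y ∈ ball x₀ r) (hyA : y ∉ ksUnion N x₀ r δ' A) (hxA : x ∈ A)
    (hx : Tendsto (fun ρ => volume (A ∩ closedBall x ρ) / volume (closedBall x ρ))
      (𝓝[>] 0) (𝓝 1)) :
    ∃ γ ∈ Ioc 0 r, volume (A ∩ closedBall x (5 * γ)) ≤
      4 ^ N * ENNReal.ofReal δ' * volume (ball x γ ∩ ksUnion N x₀ r δ' A) := by
  have hxr := hAsub hxA
  have hbdd : ∀ γ ∈ ksAdmissibleRadii δ' A x, γ ≤ r := fun γ =>
    le_of_mem_ksAdmissibleRadii hxr hy hyA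
  obtain ⟨γ, hγ, h2γ⟩ := exists_mem_two_mul_notMem (S := ksAdmissibleRadii δ' A x)
    (exists_lt_measure_inter_ball_three_mul volume (ENNReal.ofReal_lt_one.2 hδ) hx)
    ⟨r, hbdd⟩ fun _ h => h.1
  have hγr := hbdd γ hγ
  refine ⟨γ, ⟨hγ.1, hγr⟩, ?_⟩
  calc volume (A ∩ closedBall x (5 * γ)) ≤ volume (A ∩ ball x (3 * (2 * γ))) := by
        gcongr; exact closedBall_subset_ball (by linarith [hγ.1])
    _ ≤ ENNReal.ofReal δ' * volume (ball x (2 * γ)) :=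
        not_lt.1 fun h => h2γ ⟨by linarith [hγ.1], h⟩
    _ = ENNReal.ofReal δ' * (2 ^ N * volume (ball x γ)) := by
        rw [addHaar_ball_two_mul, finrank_euclideanSpace_fin]
    _ ≤ ENNReal.ofReal δ' * (2 ^ N * (2 ^ N * volume (ball x γ ∩ ball x₀ r))) := by
        gcongr
        simpa using addHaar_ball_le_two_pow_mul_inter volume hxr hγ.1.le (by linarith [hγ.1])
    _ ≤ ENNReal.ofReal δ' * (2 ^ N * (2 ^ N * volume (ball x γ ∩ ksUnion N x₀ r δ' A))) := by
        gcongr _ * (_ * (_ * volume ?_))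
        exact fun z hz => ⟨hz.1, ball_inter_subset_ksUnion hxr hγ
          ⟨ball_subset_ball (by linarith [hγ.1]) hz.1, hz.2⟩⟩
    _ = 4 ^ N * ENNReal.ofReal δ' * volume (ball x γ ∩ ksUnion N x₀ r δ' A) := by
        rw [show (4 : ℝ≥0∞) = 2 * 2 by norm_num, mul_pow]; ring

theorem volume_le_mul_volume_ksUnion (hδ : δ' < 1) (hAsub : A ⊆ ball x₀ r)
    (hne : ksUnion N x₀ r δ' A ≠ ball x₀ r) :
    volume A ≤ 4 ^ N * ENNReal.ofReal δ' * volume (ksUnion N x₀ r δ' A) := by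
  obtain ⟨y, hy, hyA⟩ := exists_of_ssubset (ksUnion_subset_ball.ssubset_of_ne hne)
  set D := {x | Tendsto (fun ρ => volume (A ∩ closedBall x ρ) / volume (closedBall x ρ))
    (𝓝[>] 0) (𝓝 1)}
  have hAD : volume (A \ D) = 0 := by
    rw [sdiff_eq, inter_comm, compl_ofPred]
    exact Measure.measure_inter_eq_zero_of_restrict
      (ae_iff.1 (Besicovitch.ae_tendsto_measure_inter_div _ A))
  calc volume A ≤ volume (A ∩ D) + volume (A \ D) := measure_le_inter_add_sdiff _ _ _
    _ = volume (A ∩ D) := by rw [hAD, add_zero]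
    _ ≤ 4 ^ N * ENNReal.ofReal δ' * volume (ksUnion N x₀ r δ' A) := by
        refine measure_le_mul_of_forall_exists_ball (R := r) volume isOpen_ksUnion.measurableSet
          fun x hx => ?_
        obtain ⟨γ, hγ, h⟩ := exists_volume_inter_closedBall_le hδ hAsub hy hyA hx.1 hx.2
        exact ⟨γ, hγ, (measure_mono (inter_subset_inter_left _ inter_subset_left)).trans h⟩

end KrylovSafonov

/-- Krylov–Safonov covering lemma: there is a dimensional constant `C = C(N) ∈ (0,1]` such
that for every measurable `A ⊆ B_r(x₀)` with `r ∈ (0,1]` and every `δ' ∈ (0,1)`, either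
`|A_{δ'}| ≥ (C/δ')|A|` or `A_{δ'} = B_r(x₀)`. -/
theorem stmt13 (N : ℕ) :
    ∃ C ∈ Set.Ioc (0:ℝ) 1, ∀ (x₀ : EuclideanSpace ℝ (Fin N)) (r δ' : ℝ),
      r ∈ Set.Ioc (0:ℝ) 1 → δ' ∈ Set.Ioo (0:ℝ) 1 →
      ∀ A : Set (EuclideanSpace ℝ (Fin N)), MeasurableSet A → A ⊆ ball x₀ r →
        ENNReal.ofReal (C / δ') * volume A ≤ volume (ksUnion N x₀ r δ' A) ∨
          ksUnion N x₀ r δ' A = ball x₀ r := by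
  refine ⟨1 / 4 ^ N,
    ⟨by positivity, div_le_one_of_le₀ (one_le_pow₀ (by norm_num)) (by positivity)⟩, ?_⟩
  intro x₀ r δ' _ hδ A _ hAsub
  have hδ₀ := hδ.1
  refine or_iff_not_imp_right.2 fun hne => ?_
  have hC : ENNReal.ofReal (1 / 4 ^ N / δ') * (4 ^ N * ENNReal.ofReal δ') = 1 := by
    rw [← ENNReal.ofReal_ofNat 4, ← ENNReal.ofReal_pow (by norm_num),
      ← ENNReal.ofReal_mul (by positivity), ← ENNReal.ofReal_mul (by positivity)]
    field_simp
    simp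
  calc ENNReal.ofReal (1 / 4 ^ N / δ') * volume A
      ≤ ENNReal.ofReal (1 / 4 ^ N / δ') *
          (4 ^ N * ENNReal.ofReal δ' * volume (ksUnion N x₀ r δ' A)) := by
        gcongr; exact volume_le_mul_volume_ksUnion hδ.2 hAsub hne
    _ = volume (ksUnion N x₀ r δ' A) := by rw [← mul_assoc, hC, one_mul]
end

section
/- Let $u : \mathbb{R}^N \to \mathbb{R}$ and let $u_m = \min\{ m\, u_+, 1 \}$ for $m \in \mathbb{N}$, where $u_+ = \max\{u, 0\}$. Let $p > 1$ and let $v : \mathbb{R}^N \to [0,\infty)$. Then for all $x, y \in \mathbb{R}^N$, $|u(x) - u(y)|^{p-2} (u(x) - u(y)) \big( u_m(x) v(x) - u_m(y) v(y) \big) \ge (u_+(x) - u_+(y)) |u_+(x) - u_+(y)|^{p-2} \, u_m(x) \big( v(x) - v(y) \big)$ whenever $u(x) \ge u(y)$. -/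
/-!
For `r ≥ 0` the signed power `|r| ^ (p - 2) * r` is `r ^ (p - 1)`, which is monotone since `p > 1`;
as `u ↦ u₊` is `1`-Lipschitz and monotone, the increment of `u₊` has the smaller signed power.
If `u(y) ≤ 0` then `u_m(y) = 0` and the `v(y)`-term only helps; if `u(y) > 0` both increments
agree and the inequality reduces to `u_m(y) ≤ u_m(x)`.
-/

open Real

lemma abs_rpow_sub_two_mul_self {p r : ℝ} (hp : p ≠ 1) (hr : 0 ≤ r) :
    |r| ^ (p - 2) * r = r ^ (p - 1) := by
  rcases hr.eq_or_lt with rfl | hr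
  · rw [mul_zero, zero_rpow (sub_ne_zero.mpr hp)]
  · rw [abs_of_pos hr, show p - 1 = (p - 2) + 1 by ring, rpow_add_one hr.ne']

lemma abs_rpow_sub_two_mul_self_le {p r s : ℝ} (hp : 1 < p) (hr : 0 ≤ r) (hrs : r ≤ s) :
    |r| ^ (p - 2) * r ≤ |s| ^ (p - 2) * s := by
  rw [abs_rpow_sub_two_mul_self hp.ne' hr, abs_rpow_sub_two_mul_self hp.ne' (hr.trans hrs)]
  exact rpow_le_rpow hr hrs (by linarith)

lemma max_zero_sub_max_zero_le {a b : ℝ} (hba : b ≤ a) : max a 0 - max b 0 ≤ a - b := by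
  simpa [abs_of_nonneg (sub_nonneg.mpr hba)] using (le_abs_self _).trans (abs_max_sub_max_le_abs a b 0)

lemma posPart_sub_mul_le_of_monotone {p a b v w : ℝ} {g : ℝ → ℝ} (hp : 1 < p) (hg : Monotone g)
    (hg0 : ∀ r ≤ 0, g r = 0) (hba : b ≤ a) (hv : 0 ≤ v) (hw : 0 ≤ w) :
    (max a 0 - max b 0) * |max a 0 - max b 0| ^ (p - 2) * g a * (v - w)
      ≤ |a - b| ^ (p - 2) * (a - b) * (g a * v - g b * w) := by
  have hpos : 0 ≤ max a 0 - max b 0 := sub_nonneg.mpr (max_le_max_right 0 hba)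
  have hD : 0 ≤ |max a 0 - max b 0| ^ (p - 2) * (max a 0 - max b 0) :=
    mul_nonneg (rpow_nonneg (abs_nonneg _) _) hpos
  have hDC := abs_rpow_sub_two_mul_self_le hp hpos (max_zero_sub_max_zero_le hba)
  have hga : 0 ≤ g a := by
    rcases le_total a 0 with ha | ha
    · exact (hg0 a ha).ge
    · exact (hg0 0 le_rfl).symm.le.trans (hg ha)
  rcases le_or_gt b 0 with hb | hb
  · rw [hg0 b hb, max_eq_right hb, sub_zero, zero_mul, sub_zero] at *
    nlinarith [mul_nonneg (mul_nonneg hD hga) hw, mul_nonneg (mul_nonneg (sub_nonneg.mpr hDC) hga) hv]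
  · have hC : 0 ≤ |a - b| ^ (p - 2) * (a - b) :=
      mul_nonneg (rpow_nonneg (abs_nonneg _) _) (sub_nonneg.mpr hba)
    rw [max_eq_left (hb.le.trans hba), max_eq_left hb.le]
    nlinarith [mul_nonneg (mul_nonneg hC (sub_nonneg.mpr (hg hba))) hw]

theorem stmt16_general (N : ℕ) (p : ℝ) (hp : 1 < p) (u : EuclideanSpace ℝ (Fin N) → ℝ)
    (m : ℕ) (v : EuclideanSpace ℝ (Fin N) → ℝ) (hv : ∀ z, 0 ≤ v z)
    (x y : EuclideanSpace ℝ (Fin N)) (hxy : u y ≤ u x) :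
    (max (u x) 0 - max (u y) 0) * |max (u x) 0 - max (u y) 0| ^ (p - 2)
        * min ((m : ℝ) * max (u x) 0) 1 * (v x - v y)
      ≤ |u x - u y| ^ (p - 2) * (u x - u y)
        * (min ((m : ℝ) * max (u x) 0) 1 * v x - min ((m : ℝ) * max (u y) 0) 1 * v y) := by
  have hmono : Monotone fun r : ℝ ↦ min ((m : ℝ) * max r 0) 1 := fun r s hrs ↦
    min_le_min_right 1 (mul_le_mul_of_nonneg_left (max_le_max_right 0 hrs) m.cast_nonneg)
  have hvanish : ∀ r ≤ (0 : ℝ), min ((m : ℝ) * max r 0) 1 = 0 := fun r hr ↦ by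
    simp [max_eq_right hr]
  exact posPart_sub_mul_le_of_monotone hp hmono hvanish hxy (hv x) (hv y)

/-- Pointwise inequality behind "the positive part of a subsolution is a subsolution":
with `u₊ = max{u,0}`, `u_m = min{m u₊, 1}`, `v ≥ 0`, and `u(x) ≥ u(y)`,
`|u(x)-u(y)|^{p-2}(u(x)-u(y))(u_m(x)v(x) - u_m(y)v(y))
  ≥ (u₊(x)-u₊(y))|u₊(x)-u₊(y)|^{p-2} u_m(x)(v(x)-v(y))`. -/
theorem stmt16 (N : ℕ) (p : ℝ) (hp : 1 < p) (u : EuclideanSpace ℝ (Fin N) → ℝ)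
    (m : ℕ) (hm : 1 ≤ m) (v : EuclideanSpace ℝ (Fin N) → ℝ) (hv : ∀ z, 0 ≤ v z)
    (x y : EuclideanSpace ℝ (Fin N)) (hxy : u y ≤ u x) :
    (max (u x) 0 - max (u y) 0) * |max (u x) 0 - max (u y) 0| ^ (p - 2)
        * min ((m : ℝ) * max (u x) 0) 1 * (v x - v y)
      ≤ |u x - u y| ^ (p - 2) * (u x - u y)
        * (min ((m : ℝ) * max (u x) 0) 1 * v x - min ((m : ℝ) * max (u y) 0) 1 * v y) :=
  stmt16_general N p hp u m v hv x y hxy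
end
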